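/- Let X and M' be nonempty finite sets, let O be a stochastic kernel from X to M' (the observation/channel kernel) and T a stochastic kernel from X to X (the source transition kernel), with Dobrushin coefficients δ(O) and δ(T). For a probability vector ρ on X write Tρ for the probability vector (Tρ)(x') := Σ_{x∈X} T(x'|x)ρ(x), write N_ρ(m') := Σ_{x∈X} O(m'|x)ρ(x), and when N_ρ(m') > 0 let ρ̄_{m'}(x) := O(m'|x)ρ(x)/N_ρ(m') be the Bayes posterior. Let μ, ν be probability vectors on X such that μ(x) > 0 implies ν(x) > 0 for all x. Then the one-step predictor updates satisfy Σ_{m'∈M' : N_μ(m')>0} N_μ(m') · ‖T(μ̄_{m'}) − T(ν̄_{m'})‖_TV ≤ (1 − δ(T))·(2 − δ(O)) · ‖μ − ν‖_TV. (This is the one-step contraction of the paper's Theorem 3, stated in explicit finite-sum form: the expected total variation between next-step predictors started from two priors, with the observation drawn from the μ-predictive distribution, contracts by the factor (1 − δ(T))(2 − δ(O)).) -/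

import Mathlib

/-!
Fix an observation `m'`. The two predictors are `T` applied to the posteriors `μ̄`, `ν̄`, so
Dobrushin's contraction for `T` bounds their distance by `(1 - δ(T)) ‖μ̄ - ν̄‖`. The identity
`N_μ (μ̄ - ν̄) = O(m'|·) (μ - ν) + (N_ν - N_μ) ν̄` gives
`N_μ ‖μ̄ - ν̄‖ ≤ ∑ₓ O(m'|x) |μ x - ν x| + |N_μ - N_ν|`. Summing over `m'`, the first terms add up
to `‖μ - ν‖` and the second to the distance between the predictive distributions `N_μ`, `N_ν`,
which Dobrushin's contraction for `O` bounds by `(1 - δ(O)) ‖μ - ν‖`.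
-/

open Finset

noncomputable def dobrushinCoeff {A B : Type*} [Fintype A] [Nonempty A] [Fintype B]
    (K : A → B → ℝ) : ℝ :=
  univ.inf' univ_nonempty fun p : A × A => ∑ b, min (K p.1 b) (K p.2 b)

section Dobrushin

variable {A B : Type*} [Fintype A] [Fintype B]

lemma abs_sub_eq_add_sub_two_mul_min (a b : ℝ) : |a - b| = a + b - 2 * min a b := by
  linarith [max_sub_min_eq_abs' a b, min_add_max a b]

lemma sum_abs_sub_eq (p q : B → ℝ) :
    ∑ b, |p b - q b| = ∑ b, p b + ∑ b, q b - 2 * ∑ b, min (p b) (q b) := by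
  simp only [abs_sub_eq_add_sub_two_mul_min, sum_sub_distrib, sum_add_distrib, mul_sum]

lemma sum_posPart_eq_sum_negPart {f : A → ℝ} (hf : ∑ a, f a = 0) :
    ∑ a, (f a)⁺ = ∑ a, (f a)⁻ := by
  rw [← sub_eq_zero, ← sum_sub_distrib]
  simpa only [posPart_sub_negPart] using hf

lemma sum_negPart_mul_sum_mul_eq (g : A → ℝ) {f : A → ℝ} (hf : ∑ a, f a = 0) :
    (∑ a, (f a)⁻) * ∑ a, g a * f a = ∑ a, ∑ a', (f a)⁺ * (f a')⁻ * (g a - g a') := by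
  have hg : ∑ a, g a * f a = ∑ a, (f a)⁺ * g a - ∑ a, (f a)⁻ * g a := by
    rw [← sum_sub_distrib]
    refine sum_congr rfl fun a _ => ?_
    rw [← sub_mul, posPart_sub_negPart, mul_comm]
  calc (∑ a, (f a)⁻) * ∑ a, g a * f a
      = (∑ a, (f a)⁺ * g a) * ∑ a', (f a')⁻ - (∑ a, (f a)⁺) * ∑ a', (f a')⁻ * g a' := by
        rw [hg, sum_posPart_eq_sum_negPart hf]; ring
    _ = ∑ a, ∑ a', (f a)⁺ * (f a')⁻ * (g a - g a') := by
        rw [sum_mul_sum, sum_mul_sum, ← sum_sub_distrib]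
        refine sum_congr rfl fun a _ => ?_
        rw [← sum_sub_distrib]
        exact sum_congr rfl fun a' _ => by ring

variable [Nonempty A]

lemma dobrushinCoeff_le_sum_min (K : A → B → ℝ) (a a' : A) :
    dobrushinCoeff K ≤ ∑ b, min (K a b) (K a' b) :=
  inf'_le _ (mem_univ (a, a'))

lemma dobrushinCoeff_le_one {K : A → B → ℝ} (hK : ∀ a, ∑ b, K a b = 1) :
    dobrushinCoeff K ≤ 1 := by
  obtain ⟨a⟩ := ‹Nonempty A›
  simpa [hK a] using dobrushinCoeff_le_sum_min K a a

lemma sum_abs_sub_le_two_mul_one_sub_dobrushinCoeff {K : A → B → ℝ}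
    (hK : ∀ a, ∑ b, K a b = 1) (a a' : A) :
    ∑ b, |K a b - K a' b| ≤ 2 * (1 - dobrushinCoeff K) := by
  rw [sum_abs_sub_eq, hK, hK]
  linarith [dobrushinCoeff_le_sum_min K a a']

theorem sum_abs_sum_mul_le_dobrushinCoeff {K : A → B → ℝ} (hK : ∀ a, ∑ b, K a b = 1)
    {f : A → ℝ} (hf : ∑ a, f a = 0) :
    ∑ b, |∑ a, K a b * f a| ≤ (1 - dobrushinCoeff K) * ∑ a, |f a| := by
  set s := ∑ a, (f a)⁻
  have hs : 0 ≤ s := sum_nonneg fun a _ => negPart_nonneg _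
  have hweight : ∀ a a', 0 ≤ (f a)⁺ * (f a')⁻ := fun a a' =>
    mul_nonneg (posPart_nonneg _) (negPart_nonneg _)
  have habs : ∑ a, |f a| = 2 * s := by
    simp only [← posPart_add_negPart, sum_add_distrib, sum_posPart_eq_sum_negPart hf]
    ring
  -- Coupling the positive and negative parts of `f` reduces to differences of rows of `K`.
  have key : s * ∑ b, |∑ a, K a b * f a| ≤ s * ((1 - dobrushinCoeff K) * (2 * s)) :=
    calc s * ∑ b, |∑ a, K a b * f a|
        = ∑ b, |∑ a, ∑ a', (f a)⁺ * (f a')⁻ * (K a b - K a' b)| := by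
          rw [mul_sum]
          refine sum_congr rfl fun b _ => ?_
          rw [← sum_negPart_mul_sum_mul_eq _ hf, abs_mul, abs_of_nonneg hs]
      _ ≤ ∑ b, ∑ a, ∑ a', (f a)⁺ * (f a')⁻ * |K a b - K a' b| := by
          refine sum_le_sum fun b _ => (abs_sum_le_sum_abs _ _).trans
            (sum_le_sum fun a _ => (abs_sum_le_sum_abs _ _).trans_eq ?_)
          refine sum_congr rfl fun a' _ => ?_
          rw [abs_mul, abs_of_nonneg (hweight a a')]
      _ = ∑ a, ∑ a', (f a)⁺ * (f a')⁻ * ∑ b, |K a b - K a' b| := by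
          simp only [mul_sum]
          rw [sum_comm]
          exact sum_congr rfl fun a _ => sum_comm
      _ ≤ ∑ a, ∑ a', (f a)⁺ * (f a')⁻ * (2 * (1 - dobrushinCoeff K)) := by
          gcongr with a _ a' _
          exact sum_abs_sub_le_two_mul_one_sub_dobrushinCoeff hK a a'
      _ = s * ((1 - dobrushinCoeff K) * (2 * s)) := by
          simp only [← sum_mul]
          rw [← sum_mul_sum, sum_posPart_eq_sum_negPart hf]
          ring
  rcases hs.eq_or_lt with hs0 | hspos
  · have hf0 : ∀ a, f a = 0 := fun a => abs_eq_zero.mp <|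
      (sum_eq_zero_iff_of_nonneg fun a _ => abs_nonneg (f a)).mp
        (by rw [habs, ← hs0, mul_zero]) a (mem_univ a)
    simp [hf0]
  · rw [habs]
    exact le_of_mul_le_mul_left key hspos

theorem sum_abs_sum_mul_sub_sum_mul_le {K : A → B → ℝ} (hK : ∀ a, ∑ b, K a b = 1)
    {μ ν : A → ℝ} (hμ : ∑ a, μ a = 1) (hν : ∑ a, ν a = 1) :
    ∑ b, |∑ a, K a b * μ a - ∑ a, K a b * ν a| ≤ (1 - dobrushinCoeff K) * ∑ a, |μ a - ν a| := by
  simp only [← sum_sub_distrib, ← mul_sub]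
  exact sum_abs_sum_mul_le_dobrushinCoeff hK (by rw [sum_sub_distrib, hμ, hν, sub_self])

end Dobrushin

section Posterior

variable {X : Type*} [Fintype X]

noncomputable def posterior (w ρ : X → ℝ) (x : X) : ℝ :=
  w x * ρ x / ∑ y, w y * ρ y

lemma sum_posterior {w ρ : X → ℝ} (h : ∑ y, w y * ρ y ≠ 0) : ∑ x, posterior w ρ x = 1 := by
  simp only [posterior, ← sum_div]
  exact div_self h

lemma sum_mul_pos_of_pos_imp_pos {w μ ν : X → ℝ} (hw : ∀ x, 0 ≤ w x) (hμ : ∀ x, 0 ≤ μ x)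
    (hν : ∀ x, 0 ≤ ν x) (habs : ∀ x, 0 < μ x → 0 < ν x) (h : 0 < ∑ x, w x * μ x) :
    0 < ∑ x, w x * ν x := by
  obtain ⟨x, -, hx⟩ := exists_lt_of_sum_lt (by simpa using h : ∑ _x : X, (0 : ℝ) < _)
  have hwx : 0 < w x := pos_of_mul_pos_left hx (hμ x)
  have hμx : 0 < μ x := pos_of_mul_pos_right hx (hw x)
  exact sum_pos' (fun x _ => mul_nonneg (hw x) (hν x))
    ⟨x, mem_univ x, mul_pos hwx (habs x hμx)⟩

lemma mul_sum_abs_posterior_sub_le {w μ ν : X → ℝ} (hw : ∀ x, 0 ≤ w x) (hν : ∀ x, 0 ≤ ν x)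
    (hNμ : 0 < ∑ x, w x * μ x) (hNν : 0 < ∑ x, w x * ν x) :
    (∑ x, w x * μ x) * ∑ x, |posterior w μ x - posterior w ν x|
      ≤ ∑ x, w x * |μ x - ν x| + |∑ x, w x * μ x - ∑ x, w x * ν x| := by
  set Nμ := ∑ x, w x * μ x
  set Nν := ∑ x, w x * ν x
  have hpost : ∀ x, Nμ * (posterior w μ x - posterior w ν x)
      = w x * (μ x - ν x) + (Nν - Nμ) * posterior w ν x := fun x => by
    change Nμ * (w x * μ x / Nμ - w x * ν x / Nν) = w x * (μ x - ν x) + (Nν - Nμ) * (w x * ν x / Nν)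
    field_simp
    ring
  have hpostν : ∀ x, 0 ≤ posterior w ν x := fun x =>
    div_nonneg (mul_nonneg (hw x) (hν x)) hNν.le
  calc Nμ * ∑ x, |posterior w μ x - posterior w ν x|
      = ∑ x, |w x * (μ x - ν x) + (Nν - Nμ) * posterior w ν x| := by
        rw [mul_sum]
        refine sum_congr rfl fun x _ => ?_
        rw [← hpost, abs_mul, abs_of_pos hNμ]
    _ ≤ ∑ x, (w x * |μ x - ν x| + |Nν - Nμ| * posterior w ν x) := by
        refine sum_le_sum fun x _ => (abs_add_le _ _).trans_eq ?_
        rw [abs_mul, abs_mul, abs_of_nonneg (hw x), abs_of_nonneg (hpostν x)]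
    _ = ∑ x, w x * |μ x - ν x| + |Nμ - Nν| := by
        rw [sum_add_distrib, ← mul_sum, sum_posterior hNν.ne', mul_one, abs_sub_comm]

end Posterior

lemma mul_sum_abs_predictor_sub_le {X M : Type*} [Fintype X] [Nonempty X] [Fintype M]
    {O : X → M → ℝ} (hO : ∀ x m, 0 ≤ O x m) {T : X → X → ℝ} (hT : ∀ x, ∑ x', T x x' = 1)
    {μ ν : X → ℝ} (hν : ∀ x, 0 ≤ ν x) {m : M}
    (hNμ : 0 < ∑ x, O x m * μ x) (hNν : 0 < ∑ x, O x m * ν x) :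
    (∑ x, O x m * μ x) * ∑ x', |∑ x, T x x' * posterior (O · m) μ x
        - ∑ x, T x x' * posterior (O · m) ν x|
      ≤ (1 - dobrushinCoeff T) *
        (∑ x, O x m * |μ x - ν x| + |∑ x, O x m * μ x - ∑ x, O x m * ν x|) := by
  have hcontr := sum_abs_sum_mul_sub_sum_mul_le hT (sum_posterior hNμ.ne') (sum_posterior hNν.ne')
  have hpost := mul_sum_abs_posterior_sub_le (fun x => hO x m) hν hNμ hNν
  have hδ : 0 ≤ 1 - dobrushinCoeff T := sub_nonneg.mpr (dobrushinCoeff_le_one hT)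
  calc _ ≤ (∑ x, O x m * μ x) * ((1 - dobrushinCoeff T) *
          ∑ x, |posterior (O · m) μ x - posterior (O · m) ν x|) := by gcongr
    _ ≤ _ := by
        rw [mul_left_comm]
        gcongr

theorem predictor_one_step_contraction_general
    {X M' : Type*} [Fintype X] [Fintype M'] [Nonempty X]
    (O : X → M' → ℝ) (hO_nonneg : ∀ x m', 0 ≤ O x m')
    (hO_sum : ∀ x, ∑ m', O x m' = 1)
    (T : X → X → ℝ)
    (hT_sum : ∀ x, ∑ x', T x x' = 1)
    (μ ν : X → ℝ)
    (hμ_nonneg : ∀ x, 0 ≤ μ x) (hμ_sum : ∑ x, μ x = 1)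
    (hν_nonneg : ∀ x, 0 ≤ ν x) (hν_sum : ∑ x, ν x = 1)
    (habs : ∀ x, 0 < μ x → 0 < ν x) :
    ∑ m' ∈ Finset.univ.filter (fun m' : M' => 0 < ∑ x, O x m' * μ x),
        (∑ x, O x m' * μ x) *
          (∑ x', |(∑ x, T x x' * (O x m' * μ x / (∑ y, O y m' * μ y)))
                   - (∑ x, T x x' * (O x m' * ν x / (∑ y, O y m' * ν y)))|)
      ≤ (1 - Finset.univ.inf' Finset.univ_nonempty
            (fun p : X × X => ∑ x', min (T p.1 x') (T p.2 x'))) *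
        (2 - Finset.univ.inf' Finset.univ_nonempty
            (fun p : X × X => ∑ m', min (O p.1 m') (O p.2 m'))) *
          ∑ x, |μ x - ν x| := by
  change _ ≤ (1 - dobrushinCoeff T) * (2 - dobrushinCoeff O) * _
  have hδT : 0 ≤ 1 - dobrushinCoeff T := sub_nonneg.mpr (dobrushinCoeff_le_one hT_sum)
  have hO_tv := sum_abs_sum_mul_sub_sum_mul_le hO_sum hμ_sum hν_sum
  have hO_mass : ∑ m', ∑ x, O x m' * |μ x - ν x| = ∑ x, |μ x - ν x| := by
    rw [sum_comm]
    exact sum_congr rfl fun x _ => by rw [← sum_mul, hO_sum, one_mul]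
  have hbound_nonneg (m' : M') :
      0 ≤ ∑ x, O x m' * |μ x - ν x| + |∑ x, O x m' * μ x - ∑ x, O x m' * ν x| :=
    add_nonneg (sum_nonneg fun x _ => mul_nonneg (hO_nonneg x m') (abs_nonneg _)) (abs_nonneg _)
  calc _ ≤ ∑ m' ∈ univ.filter (fun m' : M' => 0 < ∑ x, O x m' * μ x), (1 - dobrushinCoeff T) *
          (∑ x, O x m' * |μ x - ν x| + |∑ x, O x m' * μ x - ∑ x, O x m' * ν x|) :=
        sum_le_sum fun m' hm' => mul_sum_abs_predictor_sub_le hO_nonneg hT_sum hν_nonneg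
          (mem_filter.mp hm').2 (sum_mul_pos_of_pos_imp_pos (hO_nonneg · m') hμ_nonneg hν_nonneg
            habs (mem_filter.mp hm').2)
    _ ≤ ∑ m', (1 - dobrushinCoeff T) *
          (∑ x, O x m' * |μ x - ν x| + |∑ x, O x m' * μ x - ∑ x, O x m' * ν x|) :=
        sum_le_sum_of_subset_of_nonneg (filter_subset _ _) fun m' _ _ =>
          mul_nonneg hδT (hbound_nonneg m')
    _ = (1 - dobrushinCoeff T) * (∑ x, |μ x - ν x| +
          ∑ m', |∑ x, O x m' * μ x - ∑ x, O x m' * ν x|) := by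
        rw [← mul_sum, sum_add_distrib, hO_mass]
    _ ≤ (1 - dobrushinCoeff T) *
          (∑ x, |μ x - ν x| + (1 - dobrushinCoeff O) * ∑ x, |μ x - ν x|) := by
        gcongr
    _ = _ := by ring

/-- one-step contraction of the paper's Theorem 3: the expected
total variation between the next-step predictors `T(μ̄_{m'})` and `T(ν̄_{m'})`,
with the observation `m'` drawn from the μ-predictive distribution, contracts
by the factor `(1 − δ(T))·(2 − δ(O))`.  Here `T(x'|x)` is written `T x x'` and
`O(m'|x)` is written `O x m'`. -/
theorem predictor_one_step_contraction
    {X M' : Type*} [Fintype X] [Fintype M'] [Nonempty X] [Nonempty M']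
    (O : X → M' → ℝ) (hO_nonneg : ∀ x m', 0 ≤ O x m')
    (hO_sum : ∀ x, ∑ m', O x m' = 1)
    (T : X → X → ℝ) (hT_nonneg : ∀ x x', 0 ≤ T x x')
    (hT_sum : ∀ x, ∑ x', T x x' = 1)
    (μ ν : X → ℝ)
    (hμ_nonneg : ∀ x, 0 ≤ μ x) (hμ_sum : ∑ x, μ x = 1)
    (hν_nonneg : ∀ x, 0 ≤ ν x) (hν_sum : ∑ x, ν x = 1)
    (habs : ∀ x, 0 < μ x → 0 < ν x) :
    ∑ m' ∈ Finset.univ.filter (fun m' : M' => 0 < ∑ x, O x m' * μ x),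
        (∑ x, O x m' * μ x) *
          (∑ x', |(∑ x, T x x' * (O x m' * μ x / (∑ y, O y m' * μ y)))
                   - (∑ x, T x x' * (O x m' * ν x / (∑ y, O y m' * ν y)))|)
      ≤ (1 - Finset.univ.inf' Finset.univ_nonempty
            (fun p : X × X => ∑ x', min (T p.1 x') (T p.2 x'))) *
        (2 - Finset.univ.inf' Finset.univ_nonempty
            (fun p : X × X => ∑ m', min (O p.1 m') (O p.2 m'))) *
          ∑ x, |μ x - ν x| :=
  predictor_one_step_contraction_general O hO_nonneg hO_sum T hT_sum μ ν hμ_nonneg hμ_sum hν_nonneg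
    hν_sum habs
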